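/- arXiv:2211.13370 — 3 statements merged into one kernel-verified Lean document; each statement's English description precedes it below -/
import Mathlib

section
/- Let n be a natural number, let m₀, m_T : ℕ → ℝ be sequences with m_T(0) = 1 such that the (n+1)×(n+1) Hankel matrix of m_T (with (i,j) entry m_T(i+j)) is positive definite. Let a : ℕ → ℝ be a sequence for which there exists c with 0 < a(k) ≤ c < 1 for all k, and set t_k = ∏_{i=0}^{k−1} a(i). For each k let M_k be the (n+1)×(n+1) matrix whose (0,0) entry is 1 and whose (i,j) entry for (i,j) ≠ (0,0) is m_T(i+j) − t_k^{i+j} · m₀(i+j). Then there exists k₀ ∈ ℕ such that M_{k₀} is positive definite. -/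
/-! The perturbed moment sequences `s ↦ if s = 0 then 1 else mT s - t_k ^ s * m₀ s` converge
pointwise to `mT`, since `0 < t_k ≤ c ^ k → 0` and `mT 0 = 1`; hence their Hankel matrices converge
to the Hankel matrix of `mT`. Positive definiteness is open among symmetric matrices: by
compactness of the unit sphere, `x ⬝ᵥ M *ᵥ x` stays positive on it for every `M` close to a
positive definite `H`, and scaling extends this to all `x ≠ 0`. -/

open Finset Matrix Filter Topology

namespace Matrix

def hankel {R : Type*} (n : ℕ) (m : ℕ → R) : Matrix (Fin n) (Fin n) R :=
  of fun i j => m (i + j)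

lemma isHermitian_hankel {R : Type*} [Star R] [TrivialStar R] (n : ℕ) (m : ℕ → R) :
    (hankel n m).IsHermitian :=
  IsHermitian.ext fun i j => by simp [hankel, add_comm]

lemma continuous_hankel {R : Type*} [TopologicalSpace R] (n : ℕ) :
    Continuous (hankel n : (ℕ → R) → Matrix (Fin n) (Fin n) R) :=
  continuous_pi fun _ => continuous_pi fun _ => continuous_apply _

variable {ι : Type*} [Fintype ι]

lemma continuous_dotProduct_mulVec :
    Continuous fun p : Matrix ι ι ℝ × (ι → ℝ) => p.2 ⬝ᵥ p.1 *ᵥ p.2 :=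
  continuous_snd.dotProduct (continuous_fst.matrix_mulVec continuous_snd)

lemma posDef_of_forall_mem_sphere {M : Matrix ι ι ℝ} (hM : M.IsHermitian)
    (h : ∀ x ∈ Metric.sphere (0 : ι → ℝ) 1, 0 < x ⬝ᵥ M *ᵥ x) : M.PosDef := by
  refine .of_dotProduct_mulVec_pos hM fun x hx => ?_
  have hxn : 0 < ‖x‖ := norm_pos_iff.mpr hx
  have hu := h (‖x‖⁻¹ • x) (by simp [norm_smul, hxn.ne'])
  rw [mulVec_smul, smul_dotProduct, dotProduct_smul, smul_smul, smul_eq_mul] at hu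
  simpa using pos_of_mul_pos_right hu (by positivity)

lemma PosDef.eventually_posDef {H : Matrix ι ι ℝ} (hH : H.PosDef) :
    ∀ᶠ M in 𝓝 H, M.IsHermitian → M.PosDef := by
  have hsphere : ∀ᶠ M in 𝓝 H, ∀ x ∈ Metric.sphere (0 : ι → ℝ) 1, 0 < x ⬝ᵥ M *ᵥ x :=
    (isCompact_sphere 0 1).eventually_forall_of_forall_eventually fun x hx =>
      (continuous_dotProduct_mulVec.tendsto (H, x)).eventually <| lt_mem_nhds <| by
        simpa using hH.dotProduct_mulVec_pos (ne_zero_of_mem_sphere one_ne_zero ⟨x, hx⟩)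
  exact hsphere.mono fun M hM hherm => posDef_of_forall_mem_sphere hherm hM

end Matrix

lemma tendsto_prod_range_zero_of_norm_le {R : Type*} [NormedCommRing R] [NormOneClass R]
    {a : ℕ → R} {c : ℝ} (hc : c < 1) (ha : ∀ k, ‖a k‖ ≤ c) :
    Tendsto (fun k => ∏ i ∈ range k, a i) atTop (𝓝 0) := by
  have hc0 : 0 ≤ c := (norm_nonneg _).trans (ha 0)
  refine squeeze_zero_norm (fun k => ?_) (tendsto_pow_atTop_nhds_zero_of_lt_one hc0 hc)
  calc ‖∏ i ∈ range k, a i‖ ≤ ∏ i ∈ range k, ‖a i‖ := norm_prod_le _ _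
    _ ≤ c ^ k := by
      simpa using prod_le_prod (s := range k) (fun i _ => norm_nonneg _) fun i _ => ha i

/-- If the Hankel matrix of the target moment sequence `mT` (with `mT 0 = 1`)
is positive definite and `0 < a k ≤ c < 1`, then with `t k = ∏_{i<k} a i` there exists a time
`k₀` such that the matrix with `(0,0)` entry `1` and `(i,j)` entry
`mT (i+j) - t k₀ ^ (i+j) * m₀ (i+j)` otherwise is positive definite. -/
theorem exists_posDef_moment_gap (n : ℕ) (m₀ mT : ℕ → ℝ) (a : ℕ → ℝ)
    (hmT0 : mT 0 = 1)
    (hmT : (Matrix.of fun i j : Fin (n + 1) => mT (i.val + j.val)).PosDef)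
    (ha : ∃ c : ℝ, c < 1 ∧ ∀ k, 0 < a k ∧ a k ≤ c) :
    ∃ k₀ : ℕ,
      (Matrix.of fun i j : Fin (n + 1) =>
        if i.val + j.val = 0 then (1 : ℝ)
        else mT (i.val + j.val) -
          (∏ i' ∈ Finset.range k₀, a i') ^ (i.val + j.val) * m₀ (i.val + j.val)).PosDef := by
  obtain ⟨c, hc1, hac⟩ := ha
  have ht : Tendsto (fun k => ∏ i ∈ range k, a i) atTop (𝓝 0) :=
    tendsto_prod_range_zero_of_norm_le hc1 fun k => by
      rw [Real.norm_of_nonneg (hac k).1.le]; exact (hac k).2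
  have hmoments : Tendsto (fun k s => if s = 0 then 1 else
      mT s - (∏ i ∈ range k, a i) ^ s * m₀ s) atTop (𝓝 mT) := by
    refine tendsto_pi_nhds.2 fun s => ?_
    rcases eq_or_ne s 0 with rfl | hs
    · simp [hmT0]
    · simpa [hs] using tendsto_const_nhds.sub ((ht.pow s).mul_const (m₀ s))
  obtain ⟨k, hk⟩ := (((continuous_hankel (n + 1)).tendsto mT).comp hmoments).eventually
    hmT.eventually_posDef |>.exists
  exact ⟨k, hk (isHermitian_hankel _ _)⟩
end

section
/- Let n be a natural number, let λ₀, ..., λ_{2n} ∈ ℝ, and define q̆(x) = exp(−∑_{i=0}^{2n} λ_i x^i). Assume ∫_ℝ q̆ = 1 and ∫ |x|^l q̆(x) dx < ∞ for l ≤ 2n. Let τ be a probability density on ℝ with ∫ x^l τ(x) dx = ∫ x^l q̆(x) dx for l = 0, ..., 2n, with τ log τ integrable and x^l τ integrable for l ≤ 2n. Then V(q̆, τ) ≤ 3·( −1 + (1 + (4/9)(H[q̆] − H[τ]))^{1/2} )^{1/2}, where V(p, q) = sup_{x∈ℝ} | ∫_{(−∞, x]} (p(t) − q(t)) dt |. 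-/
/-!
Because `log q̆` is a polynomial of degree `2n` and `τ` has the same moments as `q̆` up to that
order, `∫ τ log q̆ = ∫ q̆ log q̆`, so `H[q̆] - H[τ] = ∫ τ log (τ / q̆)` is the relative entropy `D`.
Fix `x` and let `a`, `b` be the masses of `τ` and `q̆` on `(-∞, x]`. By the log-sum inequality on
`(-∞, x]` and on its complement, `D` dominates the relative entropy of the two-point distributions
`(a, 1 - a)` and `(b, 1 - b)`, which is at least `(a - b)²`. Since `|a - b| ≤ 1`, this gives
`(1 + (a - b)² / 9)² ≤ 1 + 4D/9`, i.e. the claimed bound on `|a - b|`.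
-/

open MeasureTheory Finset Real

namespace Real

lemma one_sub_inv_add_sq_div_two_le_log {s : ℝ} (hs : 1 ≤ s) :
    1 - s⁻¹ + (1 - s⁻¹) ^ 2 / 2 ≤ log s := by
  have hx0 : 0 ≤ 1 - s⁻¹ := sub_nonneg.2 (inv_le_one_of_one_le₀ hs)
  have hx1 : |1 - s⁻¹| < 1 := by
    rw [abs_of_nonneg hx0]; linarith [inv_pos.2 (zero_lt_one.trans_le hs)]
  have h := sum_le_hasSum (range 2) (fun i _ => by positivity)
    (hasSum_pow_div_log_of_abs_lt_one hx1)
  norm_num [sum_range_succ, log_inv] at h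
  exact h

lemma sq_sub_one_div_two_le_mul_log {t : ℝ} (h0 : 0 ≤ t) (h1 : t ≤ 1) :
    (t ^ 2 - 1) / 2 ≤ t * log t := by
  rcases h0.eq_or_lt with rfl | ht
  · norm_num
  have ht1 : 0 < 1 + t := by linarith
  set x := (1 - t) / (1 + t) with hx
  have hx0 : 0 ≤ x := div_nonneg (by linarith) ht1.le
  have hx1 : x < 1 := by rw [hx, div_lt_one ht1]; linarith
  have hplus : 1 + x = 2 / (1 + t) := by rw [hx]; field_simp; ring
  have hminus : 1 - x = 2 * t / (1 + t) := by rw [hx]; field_simp; ring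
  have hquot : x / (1 - x ^ 2) = (1 - t ^ 2) / (4 * t) := by
    rw [show 1 - x ^ 2 = (1 - x) * (1 + x) by ring, hplus, hminus, hx]
    field_simp; ring
  have h := log_div_le_sum_range_add hx0 hx1 0
  rw [range_zero, sum_empty, zero_add, pow_one, hquot, hplus, hminus,
    div_div_div_cancel_right₀ ht1.ne', div_mul_cancel_left₀ two_ne_zero, log_inv] at h
  have := mul_le_mul_of_nonneg_left h ht.le
  field_simp at this
  nlinarith

lemma sub_add_sq_div_max_le_mul_log_div {p q : ℝ} (hp : 0 ≤ p) (hq : 0 < q) :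
    p - q + (p - q) ^ 2 / (2 * max p q) ≤ p * log (p / q) := by
  have hq0 : q ≠ 0 := hq.ne'
  rcases le_total p q with hpq | hqp
  · have h := mul_le_mul_of_nonneg_left
      (sq_sub_one_div_two_le_mul_log (div_nonneg hp hq.le) ((div_le_one hq).2 hpq)) hq.le
    rw [← mul_assoc, mul_div_cancel₀ p hq0] at h
    rw [max_eq_right hpq]
    refine (le_of_eq ?_).trans h
    field_simp; ring
  · have hp0 : p ≠ 0 := (hq.trans_le hqp).ne'
    have h := mul_le_mul_of_nonneg_left
      (one_sub_inv_add_sq_div_two_le_log ((one_le_div hq).2 hqp)) (hq.le.trans hqp)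
    rw [max_eq_left hqp]
    refine (le_of_eq ?_).trans h
    field_simp

lemma mul_log_add_sub_le_mul_log_div {p q c : ℝ} (hp : 0 ≤ p) (hq : 0 < q) (hc : 0 < c) :
    p * log c + p - c * q ≤ p * log (p / q) := by
  rcases hp.eq_or_lt with rfl | hp
  · simp; positivity
  have h := sub_add_sq_div_max_le_mul_log_div hp.le (mul_pos hc hq)
  rw [show p / (c * q) = p / q / c by ring, log_div (div_pos hp hq).ne' hc.ne'] at h
  nlinarith [div_nonneg (sq_nonneg (p - c * q)) (by positivity : (0 : ℝ) ≤ 2 * max p (c * q))]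

lemma sq_sub_le_binary_kl {a b : ℝ} (ha0 : 0 ≤ a) (ha1 : a ≤ 1) (hb0 : 0 < b) (hb1 : b < 1) :
    (a - b) ^ 2 ≤ a * log (a / b) + (1 - a) * log ((1 - a) / (1 - b)) := by
  have h₁ := sub_add_sq_div_max_le_mul_log_div ha0 hb0
  have h₂ := sub_add_sq_div_max_le_mul_log_div (sub_nonneg.2 ha1) (sub_pos.2 hb1)
  have h₁' : (a - b) ^ 2 / 2 ≤ (a - b) ^ 2 / (2 * max a b) :=
    div_le_div_of_nonneg_left (sq_nonneg _) (by positivity) (by simp [ha1, hb1.le])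
  have h₂' : (a - b) ^ 2 / 2 ≤ (1 - a - (1 - b)) ^ 2 / (2 * max (1 - a) (1 - b)) := by
    rw [show (1 - a - (1 - b)) ^ 2 = (a - b) ^ 2 by ring]
    exact div_le_div_of_nonneg_left (sq_nonneg _) (by positivity) (by simp [ha0, hb0.le])
  linarith

end Real

section LogSum

variable {α : Type*} [MeasurableSpace α] {μ : Measure α} {τ q : α → ℝ}

lemma integral_mul_log_div_integral_le (hτ0 : ∀ x, 0 ≤ τ x) (hq : ∀ x, 0 < q x)
    (hτ : Integrable τ μ) (hq_int : Integrable q μ)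
    (hkl : Integrable (fun x => τ x * log (τ x / q x)) μ) (hb : 0 < ∫ x, q x ∂μ) :
    (∫ x, τ x ∂μ) * log ((∫ x, τ x ∂μ) / ∫ x, q x ∂μ) ≤ ∫ x, τ x * log (τ x / q x) ∂μ := by
  set a := ∫ x, τ x ∂μ
  set b := ∫ x, q x ∂μ
  rcases (show 0 ≤ a from integral_nonneg hτ0).eq_or_lt with ha | ha
  · have hτ_ae : τ =ᵐ[μ] 0 := (integral_eq_zero_iff_of_nonneg hτ0 hτ).1 ha.symm
    rw [← ha, zero_mul, integral_eq_zero_of_ae]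
    filter_upwards [hτ_ae] with x hx
    simp [hx]
  -- integrate the pointwise bound with the optimal constant `c = a / b`
  have hc : 0 < a / b := div_pos ha hb
  have hlin : Integrable (fun x => τ x * log (a / b) + τ x) μ := (hτ.mul_const _).add hτ
  calc a * log (a / b) = ∫ x, (τ x * log (a / b) + τ x - a / b * q x) ∂μ := by
        rw [integral_sub hlin (hq_int.const_mul _), integral_add (hτ.mul_const _) hτ,
          integral_mul_const, integral_const_mul, div_mul_cancel₀ _ hb.ne']
        ring
    _ ≤ ∫ x, τ x * log (τ x / q x) ∂μ :=
        integral_mono (hlin.sub (hq_int.const_mul _)) hkl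
          fun x => mul_log_add_sub_le_mul_log_div (hτ0 x) (hq x) hc

lemma setIntegral_mem_Icc_of_integral_eq_one {f : α → ℝ} (hf0 : ∀ x, 0 ≤ f x)
    (hf : Integrable f μ) (hf1 : ∫ x, f x ∂μ = 1) (s : Set α) :
    ∫ x in s, f x ∂μ ∈ Set.Icc 0 1 :=
  ⟨integral_nonneg hf0, hf1 ▸ setIntegral_le_integral hf (ae_of_all _ hf0)⟩

lemma sq_setIntegral_sub_le_integral_mul_log_div (hτ0 : ∀ x, 0 ≤ τ x) (hq : ∀ x, 0 < q x)
    (hτ : Integrable τ μ) (hq_int : Integrable q μ) (hτ1 : ∫ x, τ x ∂μ = 1)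
    (hq1 : ∫ x, q x ∂μ = 1) (hkl : Integrable (fun x => τ x * log (τ x / q x)) μ)
    {s : Set α} (hs : MeasurableSet s) (hqs : ∫ x in s, q x ∂μ ∈ Set.Ioo 0 1) :
    (∫ x in s, τ x ∂μ - ∫ x in s, q x ∂μ) ^ 2 ≤ ∫ x, τ x * log (τ x / q x) ∂μ := by
  set a := ∫ x in s, τ x ∂μ
  set b := ∫ x in s, q x ∂μ
  obtain ⟨ha0, ha1⟩ := setIntegral_mem_Icc_of_integral_eq_one hτ0 hτ hτ1 s
  have hac : ∫ x in sᶜ, τ x ∂μ = 1 - a := by linarith [integral_add_compl hs hτ]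
  have hbc : ∫ x in sᶜ, q x ∂μ = 1 - b := by linarith [integral_add_compl hs hq_int]
  have hlog_s := integral_mul_log_div_integral_le hτ0 hq hτ.integrableOn hq_int.integrableOn
    hkl.integrableOn hqs.1
  have hlog_sc := integral_mul_log_div_integral_le hτ0 hq hτ.integrableOn hq_int.integrableOn
    hkl.integrableOn (hbc ▸ sub_pos.2 hqs.2)
  rw [hac, hbc] at hlog_sc
  calc (a - b) ^ 2 ≤ a * log (a / b) + (1 - a) * log ((1 - a) / (1 - b)) :=
        sq_sub_le_binary_kl ha0 ha1 hqs.1 hqs.2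
    _ ≤ ∫ x in s, τ x * log (τ x / q x) ∂μ + ∫ x in sᶜ, τ x * log (τ x / q x) ∂μ :=
        add_le_add hlog_s hlog_sc
    _ = ∫ x, τ x * log (τ x / q x) ∂μ := integral_add_compl hs hkl

lemma setIntegral_pos_of_pos {f : α → ℝ} (hf : ∀ x, 0 < f x) {s : Set α}
    (hfs : IntegrableOn f s μ) (hs : μ s ≠ 0) : 0 < ∫ x in s, f x ∂μ := by
  rw [setIntegral_pos_iff_support_of_nonneg_ae (ae_of_all _ fun x => (hf x).le) hfs,
    Function.support_eq_univ fun x => (hf x).ne', Set.univ_inter]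
  exact pos_iff_ne_zero.2 hs

end LogSum

section Moments

variable {μ : Measure ℝ} {N : ℕ} (lam : ℕ → ℝ) {f : ℝ → ℝ}

lemma mul_sum_pow_eq_sum :
    (fun x => f x * ∑ i ∈ range N, lam i * x ^ i) =
      fun x => ∑ i ∈ range N, lam i * (x ^ i * f x) := by
  ext x
  rw [mul_sum]
  exact sum_congr rfl fun i _ => by ring

lemma integrable_mul_sum_pow (hf : ∀ i < N, Integrable (fun x => x ^ i * f x) μ) :
    Integrable (fun x => f x * ∑ i ∈ range N, lam i * x ^ i) μ := by
  rw [mul_sum_pow_eq_sum]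
  exact integrable_finsetSum _ fun i hi => (hf i (mem_range.1 hi)).const_mul (lam i)

lemma integral_mul_sum_pow (hf : ∀ i < N, Integrable (fun x => x ^ i * f x) μ) :
    ∫ x, f x * ∑ i ∈ range N, lam i * x ^ i ∂μ = ∑ i ∈ range N, lam i * ∫ x, x ^ i * f x ∂μ := by
  rw [mul_sum_pow_eq_sum, integral_finsetSum _ fun i hi => (hf i (mem_range.1 hi)).const_mul _]
  exact sum_congr rfl fun i _ => integral_const_mul _ _

lemma integral_mul_log_div_eq_sub_of_moments_eq {q τ : ℝ → ℝ}
    (hq : ∀ x, q x = exp (-(∑ i ∈ range N, lam i * x ^ i))) (hτ0 : ∀ x, 0 ≤ τ x)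
    (hqmom : ∀ i < N, Integrable (fun x => x ^ i * q x) μ)
    (hτmom : ∀ i < N, Integrable (fun x => x ^ i * τ x) μ)
    (hτlog : Integrable (fun x => τ x * log (τ x)) μ)
    (hmatch : ∀ i < N, ∫ x, x ^ i * τ x ∂μ = ∫ x, x ^ i * q x ∂μ) :
    Integrable (fun x => τ x * log (τ x / q x)) μ ∧
      ∫ x, τ x * log (τ x / q x) ∂μ = (-∫ x, q x * log (q x) ∂μ) - (-∫ x, τ x * log (τ x) ∂μ) := by
  have hlog_q x : log (q x) = -∑ i ∈ range N, lam i * x ^ i := by rw [hq, log_exp]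
  have hq_log_q :
      (fun x => q x * log (q x)) = fun x => -(q x * ∑ i ∈ range N, lam i * x ^ i) := by
    ext x; rw [hlog_q, mul_neg]
  have hτ_log_div : (fun x => τ x * log (τ x / q x)) =
      fun x => τ x * log (τ x) + τ x * ∑ i ∈ range N, lam i * x ^ i := by
    ext x
    rcases (hτ0 x).eq_or_lt with h | h
    · simp [← h]
    · rw [log_div h.ne' (hq x ▸ (exp_pos _).ne'), hlog_q]; ring
  have hτ_poly := integrable_mul_sum_pow lam hτmom
  refine ⟨hτ_log_div ▸ hτlog.add hτ_poly, ?_⟩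
  rw [hτ_log_div, hq_log_q, integral_add hτlog hτ_poly, integral_neg,
    integral_mul_sum_pow lam hτmom, integral_mul_sum_pow lam hqmom,
    sum_congr rfl fun i hi => by rw [hmatch i (mem_range.1 hi)]]
  ring

end Moments

lemma abs_le_three_mul_sqrt_neg_one_add_sqrt {d D : ℝ} (hd : |d| ≤ 1) (hD : d ^ 2 ≤ D) :
    |d| ≤ 3 * √(-1 + √(1 + 4 / 9 * D)) := by
  have hd2 : |d| ^ 2 ≤ 1 := pow_le_one₀ (abs_nonneg d) hd
  rw [← sq_abs] at hD
  -- `(1 + d²/9)² = 1 + 2d²/9 + d⁴/81 ≤ 1 + 4d²/9` because `d² ≤ 1`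
  have h1 : 1 + |d| ^ 2 / 9 ≤ √(1 + 4 / 9 * D) := le_sqrt_of_sq_le (by nlinarith)
  have h2 : |d| / 3 ≤ √(-1 + √(1 + 4 / 9 * D)) := le_sqrt_of_sq_le (by linarith)
  linarith

/-- For the exponential-polynomial (maximum-entropy) density
`q̆(x) = exp(-∑_{i=0}^{2n} λᵢ xⁱ)` and any probability density `τ` with the same power
moments up to order `2n`, the Kolmogorov (total variation of the distribution functions)
distance satisfies `V(q̆,τ) ≤ 3(−1 + (1 + (4/9)(H[q̆] − H[τ]))^½)^½`. -/
theorem tv_bound_maxent (n : ℕ) (lam : ℕ → ℝ) (qb : ℝ → ℝ)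
    (hqb : ∀ x : ℝ, qb x = Real.exp (-(∑ i ∈ Finset.range (2 * n + 1), lam i * x ^ i)))
    (hqb1 : ∫ x : ℝ, qb x = 1)
    (hqbmom : ∀ l ≤ 2 * n, Integrable (fun x : ℝ => |x| ^ l * qb x))
    (τ : ℝ → ℝ) (hτ0 : ∀ x, 0 ≤ τ x) (hτ1 : ∫ x : ℝ, τ x = 1)
    (hmatch : ∀ l ≤ 2 * n, ∫ x : ℝ, x ^ l * τ x = ∫ x : ℝ, x ^ l * qb x)
    (hτlog : Integrable (fun x : ℝ => τ x * Real.log (τ x)))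
    (hτmom : ∀ l ≤ 2 * n, Integrable (fun x : ℝ => x ^ l * τ x)) :
    (⨆ x : ℝ, |∫ t in Set.Iic x, (qb t - τ t)|) ≤
      3 * Real.sqrt (-1 + Real.sqrt (1 + (4 / 9) *
        ((-∫ x : ℝ, qb x * Real.log (qb x)) - (-∫ x : ℝ, τ x * Real.log (τ x))))) := by
  have hq_pos x : 0 < qb x := hqb x ▸ exp_pos _
  have hq_cont : Continuous qb := by rw [funext hqb]; fun_prop
  have hq_int : Integrable qb := by simpa using hqbmom 0 (Nat.zero_le _)
  have hτ_int : Integrable τ := by simpa using hτmom 0 (Nat.zero_le _)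
  have hqmom : ∀ i < 2 * n + 1, Integrable (fun x => x ^ i * qb x) := fun i hi =>
    (integrable_norm_iff ((continuous_pow i).mul hq_cont).aestronglyMeasurable).1 <|
      (hqbmom i (Nat.lt_succ_iff.1 hi)).congr
        (ae_of_all _ fun x => by simp [abs_of_pos (hq_pos x)])
  obtain ⟨hkl, hkl_eq⟩ := integral_mul_log_div_eq_sub_of_moments_eq lam hqb hτ0 hqmom
    (fun i hi => hτmom i (Nat.lt_succ_iff.1 hi)) hτlog
    (fun i hi => hmatch i (Nat.lt_succ_iff.1 hi))
  refine ciSup_le fun x => ?_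
  have hqs : ∫ t in Set.Iic x, qb t ∈ Set.Ioo 0 1 := by
    refine ⟨setIntegral_pos_of_pos hq_pos hq_int.integrableOn (by simp), ?_⟩
    have hIoi : 0 < ∫ t in Set.Ioi x, qb t :=
      setIntegral_pos_of_pos hq_pos hq_int.integrableOn (by simp)
    have hsplit := integral_add_compl (measurableSet_Iic (a := x)) hq_int
    rw [Set.compl_Iic] at hsplit
    linarith
  have hτs := setIntegral_mem_Icc_of_integral_eq_one hτ0 hτ_int hτ1 (Set.Iic x)
  rw [integral_sub hq_int.integrableOn hτ_int.integrableOn, ← hkl_eq]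
  refine abs_le_three_mul_sqrt_neg_one_add_sqrt
    (abs_le.2 ⟨by linarith [hqs.1, hτs.2], by linarith [hqs.2, hτs.1]⟩) ?_
  rw [← neg_sub, neg_sq]
  exact sq_setIntegral_sub_le_integral_mul_log_div hτ0 hq_pos hτ_int hq_int hτ1 hqb1 hkl
    measurableSet_Iic hqs
end

section
/- Let n be a natural number, and let ρ and τ be probability densities on ℝ with ∫ x^l ρ(x) dx = ∫ x^l τ(x) dx for l = 0, 1, ..., 2n, with ρ log ρ, τ log τ, and x^l ρ, x^l τ (l ≤ 2n) Lebesgue integrable. Let λ₀, ..., λ_{2n} ∈ ℝ and q̆(x) = exp(−∑_{i=0}^{2n} λ_i x^i) satisfy ∫ q̆ = 1 and ∫ x^l q̆(x) dx = ∫ x^l τ(x) dx for l = 0, ..., 2n, with ∫|x|^l q̆ < ∞ for l ≤ 2n. Then V(ρ, τ) ≤ 3·( −1 + (1 + (4/9)(H[q̆] − H[ρ]))^{1/2} )^{1/2} + 3·( −1 + (1 + (4/9)(H[q̆] − H[τ]))^{1/2} )^{1/2}, where V(p, q) = sup_{x∈ℝ} | ∫_{(−∞, x]} (p(t) − q(t))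 dt |. -/
open MeasureTheory Finset

lemma aux_log (a b : ℝ) (ha : 0 ≤ a) (hb : 0 < b) :
    (Real.sqrt a - Real.sqrt b)^2 ≤ a * Real.log a - a * Real.log b - a + b := by
  rcases ha.eq_or_lt with h | h
  · rw [← h]
    simp [Real.sq_sqrt hb.le]
  · have hsa : (0:ℝ) < Real.sqrt a := Real.sqrt_pos.2 h
    have hsb : (0:ℝ) < Real.sqrt b := Real.sqrt_pos.2 hb
    have hkey : Real.log (Real.sqrt b) - Real.log (Real.sqrt a) ≤ Real.sqrt b / Real.sqrt a - 1 := by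
      have := Real.log_le_sub_one_of_pos (div_pos hsb hsa)
      rwa [Real.log_div hsb.ne' hsa.ne'] at this
    have hla : Real.log a = 2 * Real.log (Real.sqrt a) := by
      rw [Real.log_sqrt h.le]; ring
    have hlb : Real.log b = 2 * Real.log (Real.sqrt b) := by
      rw [Real.log_sqrt hb.le]; ring
    have ha2 : Real.sqrt a ^ 2 = a := Real.sq_sqrt h.le
    have hb2 : Real.sqrt b ^ 2 = b := Real.sq_sqrt hb.le
    have hmul : a * (Real.sqrt b / Real.sqrt a) = Real.sqrt a * Real.sqrt b := by
      field_simp; nlinarith [ha2]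
    rw [hla, hlb]
    nlinarith [mul_le_mul_of_nonneg_left hkey (by positivity : (0:ℝ) ≤ 2 * a)]

lemma half_l1_le (p q : ℝ → ℝ) (hp0 : ∀ x, 0 ≤ p x) (hq0 : ∀ x, 0 < q x)
    (hqc : Continuous q)
    (hp : Integrable p) (hq : Integrable q)
    (hp1 : ∫ x : ℝ, p x = 1) (hq1 : ∫ x : ℝ, q x = 1)
    (hfi : Integrable (fun x : ℝ => p x * Real.log (p x) - p x * Real.log (q x))) :
    0 ≤ (∫ x : ℝ, (p x * Real.log (p x) - p x * Real.log (q x))) ∧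
      (∫ x : ℝ, |p x - q x|) ≤
        2 * Real.sqrt (∫ x : ℝ, (p x * Real.log (p x) - p x * Real.log (q x))) := by
  set D := ∫ x : ℝ, (p x * Real.log (p x) - p x * Real.log (q x)) with hDdef
  set f : ℝ → ℝ := fun x => p x * Real.log (p x) - p x * Real.log (q x) - p x + q x with hfdef
  have e1 : Integrable (fun x : ℝ => p x * Real.log (p x) - p x * Real.log (q x) - p x) :=
    hfi.sub hp
  have hfint : Integrable f := e1.add hq
  have hfD : ∫ x : ℝ, f x = D := by
    rw [hfdef]
    simp only
    rw [integral_add e1 hq, integral_sub hfi hp, hp1, hq1]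
    ring
  set u : ℝ → ℝ := fun x => Real.sqrt (p x) - Real.sqrt (q x) with hudef
  set v : ℝ → ℝ := fun x => Real.sqrt (p x) + Real.sqrt (q x) with hvdef
  have hu_le : ∀ x, u x ^ 2 ≤ f x := fun x => aux_log (p x) (q x) (hp0 x) (hq0 x)
  have hpsm : AEStronglyMeasurable (fun x => Real.sqrt (p x)) volume :=
    Real.continuous_sqrt.comp_aestronglyMeasurable hp.aestronglyMeasurable
  have hqsm : AEStronglyMeasurable (fun x => Real.sqrt (q x)) volume :=
    (Real.continuous_sqrt.comp hqc).aestronglyMeasurable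
  have hum : AEStronglyMeasurable u volume := hpsm.sub hqsm
  have hvm : AEStronglyMeasurable v volume := hpsm.add hqsm
  have hu2 : Integrable (fun x => u x ^ 2) := by
    refine hfint.mono' (hum.pow 2) (Filter.Eventually.of_forall fun x => ?_)
    rw [Real.norm_eq_abs, abs_of_nonneg (sq_nonneg _)]
    exact hu_le x
  have hgint : Integrable (fun x : ℝ => 2 * p x + 2 * q x) :=
    (hp.const_mul 2).add (hq.const_mul 2)
  have hvle : ∀ x, v x ^ 2 ≤ 2 * p x + 2 * q x := by
    intro x
    have h1 : Real.sqrt (p x) ^ 2 = p x := Real.sq_sqrt (hp0 x)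
    have h2 : Real.sqrt (q x) ^ 2 = q x := Real.sq_sqrt (hq0 x).le
    simp only [hvdef]
    nlinarith [sq_nonneg (Real.sqrt (p x) - Real.sqrt (q x))]
  have hv2 : Integrable (fun x => v x ^ 2) := by
    refine hgint.mono' (hvm.pow 2) (Filter.Eventually.of_forall fun x => ?_)
    rw [Real.norm_eq_abs, abs_of_nonneg (sq_nonneg _)]
    exact hvle x
  set A := ∫ x : ℝ, u x ^ 2 with hAdef
  have hA0 : 0 ≤ A := integral_nonneg fun x => sq_nonneg _
  have hAD : A ≤ D := by
    rw [← hfD]; exact integral_mono hu2 hfint hu_le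
  have hD0 : 0 ≤ D := hA0.trans hAD
  refine ⟨hD0, ?_⟩
  have hB : ∫ x : ℝ, v x ^ 2 ≤ 4 := by
    have h4 : ∫ x : ℝ, (2 * p x + 2 * q x) = 4 := by
      rw [integral_add (hp.const_mul 2) (hq.const_mul 2), integral_const_mul, integral_const_mul,
        hp1, hq1]
      norm_num
    rw [← h4]
    exact integral_mono hv2 hgint hvle
  have habs : ∀ x, |p x - q x| = |u x * v x| := by
    intro x
    have h1 : Real.sqrt (p x) ^ 2 = p x := Real.sq_sqrt (hp0 x)
    have h2 : Real.sqrt (q x) ^ 2 = q x := Real.sq_sqrt (hq0 x).le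
    congr 1
    simp only [hudef, hvdef]
    nlinarith
  have hIabs : Integrable (fun x => |p x - q x|) := (hp.sub hq).abs
  have key : ∀ t : ℝ, 0 < t → (∫ x : ℝ, |p x - q x|) ≤ (t * A + 4 / t) / 2 := by
    intro t ht
    have hptw : ∀ x, |p x - q x| ≤ (t * u x ^ 2 + v x ^ 2 / t) / 2 := by
      intro x
      rw [habs x, abs_mul]
      rw [le_div_iff₀ (by norm_num : (0:ℝ) < 2)]
      have hvt : v x ^ 2 / t = v x ^ 2 * t⁻¹ := div_eq_mul_inv _ _
      rw [hvt]
      have h2 : |u x| ^ 2 = u x ^ 2 := sq_abs _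
      have h3 : |v x| ^ 2 = v x ^ 2 := sq_abs _
      have hexp : ∀ a b : ℝ, t⁻¹ * (t * a - b) ^ 2 = t * a ^ 2 - 2 * (a * b) + b ^ 2 * t⁻¹ := by
        intro a b
        field_simp
        ring
      have hnn : 0 ≤ t⁻¹ * (t * |u x| - |v x|) ^ 2 :=
        mul_nonneg (inv_pos.2 ht).le (sq_nonneg _)
      rw [hexp (|u x|) (|v x|), h2, h3] at hnn
      linarith [hnn]
    have hint2 : Integrable (fun x => (t * u x ^ 2 + v x ^ 2 / t) / 2) :=
      ((hu2.const_mul t).add (hv2.div_const t)).div_const 2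
    calc (∫ x : ℝ, |p x - q x|) ≤ ∫ x : ℝ, (t * u x ^ 2 + v x ^ 2 / t) / 2 :=
          integral_mono hIabs hint2 hptw
      _ = (t * A + (∫ x : ℝ, v x ^ 2) / t) / 2 := by
          rw [integral_div, integral_add (hu2.const_mul t) (hv2.div_const t),
            integral_const_mul, integral_div]
      _ ≤ (t * A + 4 / t) / 2 := by gcongr
  rcases hA0.eq_or_lt with hA | hA
  · have hae : (fun x => u x ^ 2) =ᵐ[volume] 0 := by
      rw [← integral_eq_zero_iff_of_nonneg (fun x => sq_nonneg (u x)) hu2]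
      exact hA.symm
    have hpq : (fun x => |p x - q x|) =ᵐ[volume] (fun _ => (0:ℝ)) := by
      filter_upwards [hae] with x hx
      have hu0 : u x = 0 := pow_eq_zero_iff (n := 2) (by norm_num) |>.1 hx
      have hs : Real.sqrt (p x) = Real.sqrt (q x) := by
        have := hu0
        simp only [hudef, sub_eq_zero] at this
        exact this
      have hpqx : p x = q x := by
        have := congrArg (fun y => y ^ 2) hs
        simpa [Real.sq_sqrt (hp0 x), Real.sq_sqrt (hq0 x).le] using this
      simp [hpqx]
    rw [integral_congr_ae hpq, integral_zero]
    positivity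
  · have hsA : 0 < Real.sqrt A := Real.sqrt_pos.2 hA
    have ht : (0:ℝ) < 2 / Real.sqrt A := by positivity
    have hk := key _ ht
    have hss : Real.sqrt A * Real.sqrt A = A := Real.mul_self_sqrt hA0
    have hAval : 2 / Real.sqrt A * A = 2 * Real.sqrt A := by
      field_simp
      nlinarith [hss]
    have h4val : 4 / (2 / Real.sqrt A) = 2 * Real.sqrt A := by
      field_simp
      ring
    rw [hAval, h4val] at hk
    calc (∫ x : ℝ, |p x - q x|) ≤ (2 * Real.sqrt A + 2 * Real.sqrt A) / 2 := hk
      _ = 2 * Real.sqrt A := by ring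
      _ ≤ 2 * Real.sqrt D := by
          have := Real.sqrt_le_sqrt hAD
          linarith

lemma num_bound (d δ : ℝ) (hd : 0 ≤ d) (hδ1 : δ ≤ 1) (hδd : δ ≤ Real.sqrt d) :
    δ ≤ 3 * Real.sqrt (-1 + Real.sqrt (1 + (4 / 9) * d)) := by
  set s := Real.sqrt (1 + (4 / 9) * d) with hs
  have hs2 : s ^ 2 = 1 + (4 / 9) * d := Real.sq_sqrt (by positivity)
  have hs0 : 0 ≤ s := Real.sqrt_nonneg _
  have hs1 : 1 ≤ s := by nlinarith
  by_cases hd18 : d ≤ 18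
  · have h1 : 1 + d / 9 ≤ s := by nlinarith
    calc δ ≤ Real.sqrt d := hδd
      _ ≤ Real.sqrt (9 * (-1 + s)) := Real.sqrt_le_sqrt (by linarith)
      _ = 3 * Real.sqrt (-1 + s) := by
          rw [show (9:ℝ) * (-1 + s) = 3 ^ 2 * (-1 + s) by ring,
            Real.sqrt_mul (by positivity) _, Real.sqrt_sq (by norm_num)]
  · have h10 : (10:ℝ) / 9 ≤ s := by nlinarith
    have h19 : Real.sqrt ((1:ℝ) / 9) ≤ Real.sqrt (-1 + s) := Real.sqrt_le_sqrt (by linarith)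
    have hval : Real.sqrt ((1:ℝ) / 9) = 1 / 3 := by
      rw [show (1:ℝ) / 9 = (1 / 3) ^ 2 by norm_num, Real.sqrt_sq (by norm_num)]
    rw [hval] at h19
    linarith

lemma kolmo (g : ℝ → ℝ) (hg : Integrable g) (h0 : ∫ x : ℝ, g x = 0) (b : ℝ) :
    |∫ t in Set.Iic b, g t| ≤ (∫ t : ℝ, |g t|) / 2 := by
  have hsplit : (∫ t in Set.Iic b, g t) + ∫ t in Set.Ioi b, g t = ∫ t : ℝ, g t :=
    intervalIntegral.integral_Iic_add_Ioi hg.integrableOn hg.integrableOn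
  have hsplitabs : (∫ t in Set.Iic b, |g t|) + ∫ t in Set.Ioi b, |g t| = ∫ t : ℝ, |g t| :=
    intervalIntegral.integral_Iic_add_Ioi hg.abs.integrableOn hg.abs.integrableOn
  have h1 : |∫ t in Set.Iic b, g t| ≤ ∫ t in Set.Iic b, |g t| := by
    simpa [Real.norm_eq_abs] using
      norm_integral_le_integral_norm (μ := volume.restrict (Set.Iic b)) g
  have h2 : |∫ t in Set.Ioi b, g t| ≤ ∫ t in Set.Ioi b, |g t| := by
    simpa [Real.norm_eq_abs] using
      norm_integral_le_integral_norm (μ := volume.restrict (Set.Ioi b)) g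
  rw [h0] at hsplit
  have hIoi : (∫ t in Set.Ioi b, g t) = -(∫ t in Set.Iic b, g t) := by linarith
  rw [hIoi, abs_neg] at h2
  linarith

/-- If the densities `ρ` (terminal density of the algorithm) and `τ`
(desired terminal density) share their power moments up to order `2n`, and `q̆` is the
maximum-entropy exponential-polynomial density with these moments, then
`V(ρ,τ) ≤ 3(−1+(1+(4/9)(H[q̆]−H[ρ]))^½)^½ + 3(−1+(1+(4/9)(H[q̆]−H[τ]))^½)^½`. -/
theorem tv_error_bound_terminal_density (n : ℕ) (ρ τ : ℝ → ℝ)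
    (hρ0 : ∀ x, 0 ≤ ρ x) (hρ1 : ∫ x : ℝ, ρ x = 1)
    (hτ0 : ∀ x, 0 ≤ τ x) (hτ1 : ∫ x : ℝ, τ x = 1)
    (hmatch : ∀ l ≤ 2 * n, ∫ x : ℝ, x ^ l * ρ x = ∫ x : ℝ, x ^ l * τ x)
    (hρlog : Integrable (fun x : ℝ => ρ x * Real.log (ρ x)))
    (hτlog : Integrable (fun x : ℝ => τ x * Real.log (τ x)))
    (hρmom : ∀ l ≤ 2 * n, Integrable (fun x : ℝ => x ^ l * ρ x))
    (hτmom : ∀ l ≤ 2 * n, Integrable (fun x : ℝ => x ^ l * τ x))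
    (lam : ℕ → ℝ) (qb : ℝ → ℝ)
    (hqb : ∀ x : ℝ, qb x = Real.exp (-(∑ i ∈ Finset.range (2 * n + 1), lam i * x ^ i)))
    (hqb1 : ∫ x : ℝ, qb x = 1)
    (hqbmatch : ∀ l ≤ 2 * n, ∫ x : ℝ, x ^ l * qb x = ∫ x : ℝ, x ^ l * τ x)
    (hqbmom : ∀ l ≤ 2 * n, Integrable (fun x : ℝ => |x| ^ l * qb x)) :
    (⨆ x : ℝ, |∫ t in Set.Iic x, (ρ t - τ t)|) ≤
      3 * Real.sqrt (-1 + Real.sqrt (1 + (4 / 9) *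
        ((-∫ x : ℝ, qb x * Real.log (qb x)) - (-∫ x : ℝ, ρ x * Real.log (ρ x))))) +
      3 * Real.sqrt (-1 + Real.sqrt (1 + (4 / 9) *
        ((-∫ x : ℝ, qb x * Real.log (qb x)) - (-∫ x : ℝ, τ x * Real.log (τ x))))) := by
  have hqbc : Continuous qb := by
    have : qb = fun x => Real.exp (-(∑ i ∈ Finset.range (2 * n + 1), lam i * x ^ i)) :=
      funext hqb
    rw [this]
    continuity
  have hqb0 : ∀ x, 0 < qb x := fun x => by rw [hqb]; exact Real.exp_pos _
  have hlog : ∀ x, Real.log (qb x) = -(∑ i ∈ Finset.range (2 * n + 1), lam i * x ^ i) :=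
    fun x => by rw [hqb, Real.log_exp]
  have hρint : Integrable ρ := by simpa using hρmom 0 (Nat.zero_le _)
  have hτint : Integrable τ := by simpa using hτmom 0 (Nat.zero_le _)
  have hqbint : Integrable qb := by simpa using hqbmom 0 (Nat.zero_le _)
  have hqmom : ∀ l ≤ 2 * n, Integrable (fun x : ℝ => x ^ l * qb x) := by
    intro l hl
    refine (hqbmom l hl).mono' ((continuous_pow l).mul hqbc).aestronglyMeasurable
      (Filter.Eventually.of_forall fun x => ?_)
    rw [Real.norm_eq_abs, abs_mul, abs_pow, abs_of_pos (hqb0 x)]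
  have gen : ∀ p : ℝ → ℝ, (∀ l ≤ 2 * n, Integrable (fun x : ℝ => x ^ l * p x)) →
      Integrable (fun x : ℝ => p x * Real.log (qb x)) ∧
      ∫ x : ℝ, p x * Real.log (qb x)
        = ∑ i ∈ Finset.range (2 * n + 1), -(lam i) * ∫ x : ℝ, x ^ i * p x := by
    intro p hmom
    have heq : (fun x : ℝ => p x * Real.log (qb x))
        = fun x : ℝ => ∑ i ∈ Finset.range (2 * n + 1), -(lam i) * (x ^ i * p x) := by
      funext x
      rw [hlog x, mul_neg, Finset.mul_sum, ← Finset.sum_neg_distrib]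
      exact Finset.sum_congr rfl fun i _ => by ring
    have hint : ∀ i ∈ Finset.range (2 * n + 1),
        Integrable (fun x : ℝ => -(lam i) * (x ^ i * p x)) := fun i hi =>
      (hmom i (Nat.lt_succ_iff.mp (Finset.mem_range.mp hi))).const_mul _
    constructor
    · rw [heq]; exact integrable_finset_sum _ hint
    · rw [heq, integral_finset_sum _ hint]
      exact Finset.sum_congr rfl fun i _ => integral_const_mul _ _
  obtain ⟨hρlq, hρval⟩ := gen ρ hρmom
  obtain ⟨hτlq, hτval⟩ := gen τ hτmom
  obtain ⟨hqlq', hqval⟩ := gen qb hqmom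
  have hqlq : Integrable (fun x : ℝ => qb x * Real.log (qb x)) := hqlq'
  have hEρ : ∫ x : ℝ, ρ x * Real.log (qb x) = ∫ x : ℝ, qb x * Real.log (qb x) := by
    rw [hρval, hqval]
    refine Finset.sum_congr rfl fun i hi => ?_
    rw [hmatch i (Nat.lt_succ_iff.mp (Finset.mem_range.mp hi)),
      hqbmatch i (Nat.lt_succ_iff.mp (Finset.mem_range.mp hi))]
  have hEτ : ∫ x : ℝ, τ x * Real.log (qb x) = ∫ x : ℝ, qb x * Real.log (qb x) := by
    rw [hτval, hqval]
    refine Finset.sum_congr rfl fun i hi => ?_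
    rw [hqbmatch i (Nat.lt_succ_iff.mp (Finset.mem_range.mp hi))]
  set Dρ := (-∫ x : ℝ, qb x * Real.log (qb x)) - (-∫ x : ℝ, ρ x * Real.log (ρ x)) with hDρ
  set Dτ := (-∫ x : ℝ, qb x * Real.log (qb x)) - (-∫ x : ℝ, τ x * Real.log (τ x)) with hDτ
  have hDρeq : ∫ x : ℝ, (ρ x * Real.log (ρ x) - ρ x * Real.log (qb x)) = Dρ := by
    rw [integral_sub hρlog hρlq, hEρ, hDρ]; ring
  have hDτeq : ∫ x : ℝ, (τ x * Real.log (τ x) - τ x * Real.log (qb x)) = Dτ := by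
    rw [integral_sub hτlog hτlq, hEτ, hDτ]; ring
  obtain ⟨hDρ0, hρl1⟩ := half_l1_le ρ qb hρ0 hqb0 hqbc hρint hqbint hρ1 hqb1 (hρlog.sub hρlq)
  obtain ⟨hDτ0, hτl1⟩ := half_l1_le τ qb hτ0 hqb0 hqbc hτint hqbint hτ1 hqb1 (hτlog.sub hτlq)
  rw [hDρeq] at hDρ0 hρl1
  rw [hDτeq] at hDτ0 hτl1
  -- bounds on half-L1 distances
  have hl1two : ∀ p : ℝ → ℝ, (∀ x, 0 ≤ p x) → Integrable p → (∫ x : ℝ, p x = 1) →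
      (∫ x : ℝ, |p x - qb x|) ≤ 2 := by
    intro p hp0 hp hp1
    have : (∫ x : ℝ, |p x - qb x|) ≤ ∫ x : ℝ, (p x + qb x) := by
      refine integral_mono (hp.sub hqbint).abs (hp.add hqbint) fun x => ?_
      have := abs_sub (p x) (qb x)
      calc |p x - qb x| ≤ |p x| + |qb x| := abs_sub _ _
        _ = p x + qb x := by rw [abs_of_nonneg (hp0 x), abs_of_pos (hqb0 x)]
    rw [integral_add hp hqbint, hp1, hqb1] at this
    linarith
  have hδρ1 : (∫ x : ℝ, |ρ x - qb x|) / 2 ≤ 1 := by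
    have := hl1two ρ hρ0 hρint hρ1; linarith
  have hδτ1 : (∫ x : ℝ, |τ x - qb x|) / 2 ≤ 1 := by
    have := hl1two τ hτ0 hτint hτ1; linarith
  have hδρd : (∫ x : ℝ, |ρ x - qb x|) / 2 ≤ Real.sqrt Dρ := by linarith
  have hδτd : (∫ x : ℝ, |τ x - qb x|) / 2 ≤ Real.sqrt Dτ := by linarith
  have hbρ := num_bound Dρ _ hDρ0 hδρ1 hδρd
  have hbτ := num_bound Dτ _ hDτ0 hδτ1 hδτd
  refine Real.iSup_le (fun x => ?_) (by positivity)
  have hρqb : Integrable (fun t : ℝ => ρ t - qb t) := hρint.sub hqbint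
  have hqbτ : Integrable (fun t : ℝ => qb t - τ t) := hqbint.sub hτint
  have hsum : ∫ t in Set.Iic x, (ρ t - τ t)
      = (∫ t in Set.Iic x, (ρ t - qb t)) + ∫ t in Set.Iic x, (qb t - τ t) := by
    rw [← integral_add hρqb.integrableOn hqbτ.integrableOn]
    exact integral_congr_ae (Filter.Eventually.of_forall fun t => by ring)
  have h0ρ : ∫ t : ℝ, (ρ t - qb t) = 0 := by
    rw [integral_sub hρint hqbint, hρ1, hqb1]; ring
  have h0τ : ∫ t : ℝ, (qb t - τ t) = 0 := by
    rw [integral_sub hqbint hτint, hτ1, hqb1]; ring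
  have k1 := kolmo _ hρqb h0ρ x
  have k2 := kolmo _ hqbτ h0τ x
  have habsτ : (∫ t : ℝ, |qb t - τ t|) = ∫ t : ℝ, |τ t - qb t| := by
    exact integral_congr_ae (Filter.Eventually.of_forall fun t => abs_sub_comm (qb t) (τ t))
  rw [habsτ] at k2
  calc |∫ t in Set.Iic x, (ρ t - τ t)|
      ≤ |∫ t in Set.Iic x, (ρ t - qb t)| + |∫ t in Set.Iic x, (qb t - τ t)| := by
        rw [hsum]; exact abs_add_le _ _
    _ ≤ (∫ t : ℝ, |ρ t - qb t|) / 2 + (∫ t : ℝ, |τ t - qb t|) / 2 := add_le_add k1 k2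
    _ ≤ 3 * Real.sqrt (-1 + Real.sqrt (1 + (4 / 9) * Dρ)) +
        3 * Real.sqrt (-1 + Real.sqrt (1 + (4 / 9) * Dτ)) := add_le_add hbρ hbτ
end
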